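/- For the system ẋ = (A + u(t)B)x with A = Id + J, B = −Id + J, J = [[0,−2],[2,0]], and controls u : ℝ → [-1,1]: for every nonzero x ∈ ℝ² there exist t > 0 and a control u with φ(t, x, u) = e^{2t} x, and for every control u and t > 0, ‖φ(t,x,u)‖ ≤ e^{2t}‖x‖; hence ξ(x) = 2 for all nonzero x. -/

import Mathlib

/-!
Along every trajectory `d/ds ‖x‖² = 2⟪x, (A + uB)x⟫ = 2(1 - u)‖x‖² ≤ 4‖x‖²`, since the rotation
part `J` of `A` and `B` is skew-symmetric; hence `e^{-4s}‖x s‖²` is antitone and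
`‖x t‖ ≤ e^{2t}‖x 0‖`. The bound is attained by the constant control `u ≡ -1`, for which
`A - B = 2 • 1` and the trajectory is `e^{2s} • x 0`.
-/

open Real
open scoped RealInnerProductSpace

section Growth

variable {E : Type*} [NormedAddCommGroup E] [InnerProductSpace ℝ E]

theorem norm_le_exp_mul_of_inner_deriv_le {x x' : ℝ → E} {c : ℝ}
    (hx : ∀ s, HasDerivAt x (x' s) s) (hc : ∀ s, ⟪x s, x' s⟫ ≤ c * ‖x s‖ ^ 2)
    {t : ℝ} (ht : 0 ≤ t) : ‖x t‖ ≤ exp (c * t) * ‖x 0‖ := by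
  set g : ℝ → ℝ := fun s => exp (-(2 * c) * s) * ‖x s‖ ^ 2
  have hg : ∀ s, HasDerivAt g
      (exp (-(2 * c) * s) * (-(2 * c)) * ‖x s‖ ^ 2 + exp (-(2 * c) * s) * (2 * ⟪x s, x' s⟫)) s :=
    fun s => (((hasDerivAt_id s).const_mul _).exp.congr_deriv (by simp)).mul (hx s).norm_sq
  have hg_anti : Antitone g := by
    refine antitone_of_deriv_nonpos (fun s => (hg s).differentiableAt) fun s => ?_
    rw [(hg s).deriv]
    nlinarith [exp_pos (-(2 * c) * s), hc s]
  have hsq : ‖x t‖ ^ 2 ≤ (exp (c * t) * ‖x 0‖) ^ 2 := by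
    have h := hg_anti ht
    simp only [g, mul_zero, exp_zero, one_mul] at h
    have hexp : exp (c * t) ^ 2 * exp (-(2 * c) * t) = 1 := by
      rw [← exp_nat_mul, ← exp_add]; ring_nf; exact exp_zero
    nlinarith [exp_pos (c * t), exp_pos (-(2 * c) * t)]
  exact (pow_le_pow_iff_left₀ (norm_nonneg _) (by positivity) two_ne_zero).1 hsq

theorem hasDerivAt_exp_mul_smul (c : ℝ) (v : E) (s : ℝ) :
    HasDerivAt (fun s => exp (c * s) • v) (c • exp (c * s) • v) s := by
  refine (((hasDerivAt_id' s).const_mul c).exp.smul_const v).congr_deriv ?_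
  rw [smul_smul, mul_one, mul_comm]

end Growth

/-- The paper's `A + u • B`. -/
def systemMatrix (u : ℝ) : Matrix (Fin 2) (Fin 2) ℝ :=
  ((1 : Matrix (Fin 2) (Fin 2) ℝ) + !![(0:ℝ), -2; 2, 0])
    + u • ((-(1 : Matrix (Fin 2) (Fin 2) ℝ)) + !![(0:ℝ), -2; 2, 0])

theorem inner_toEuclideanLin_systemMatrix (u : ℝ) (v : EuclideanSpace ℝ (Fin 2)) :
    ⟪v, Matrix.toEuclideanLin (systemMatrix u) v⟫ = (1 - u) * ‖v‖ ^ 2 := by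
  simp [systemMatrix, Matrix.toLpLin_apply, PiLp.inner_apply, dotProduct, Fin.sum_univ_two,
    EuclideanSpace.norm_sq_eq]
  ring

theorem toEuclideanLin_systemMatrix_neg_one (v : EuclideanSpace ℝ (Fin 2)) :
    Matrix.toEuclideanLin (systemMatrix (-1)) v = (2 : ℝ) • v := by
  ext i
  fin_cases i <;> simp [systemMatrix, Matrix.toLpLin_apply, dotProduct,
    Fin.sum_univ_two] <;> ring

theorem example2_xi_eq_two_general
    (x₀ : EuclideanSpace ℝ (Fin 2)) :
    (∃ t > (0:ℝ), ∃ u : ℝ → ℝ, (∀ s, u s ∈ Set.Icc (-1:ℝ) 1) ∧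
      ∃ x : ℝ → EuclideanSpace ℝ (Fin 2), x 0 = x₀ ∧
        (∀ s : ℝ, HasDerivAt x
          (Matrix.toEuclideanLin
            (((1 : Matrix (Fin 2) (Fin 2) ℝ) + !![(0:ℝ), -2; 2, 0])
              + u s • ((-(1 : Matrix (Fin 2) (Fin 2) ℝ)) + !![(0:ℝ), -2; 2, 0])) (x s)) s) ∧
        x t = Real.exp (2 * t) • x₀) ∧
    (∀ u : ℝ → ℝ, (∀ s, u s ∈ Set.Icc (-1:ℝ) 1) →
      ∀ x : ℝ → EuclideanSpace ℝ (Fin 2), x 0 = x₀ →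
        (∀ s : ℝ, HasDerivAt x
          (Matrix.toEuclideanLin
            (((1 : Matrix (Fin 2) (Fin 2) ℝ) + !![(0:ℝ), -2; 2, 0])
              + u s • ((-(1 : Matrix (Fin 2) (Fin 2) ℝ)) + !![(0:ℝ), -2; 2, 0])) (x s)) s) →
        ∀ t : ℝ, 0 < t → ‖x t‖ ≤ Real.exp (2 * t) * ‖x₀‖) := by
  refine ⟨⟨1, one_pos, fun _ => -1, fun _ => ⟨le_rfl, by norm_num⟩,
    fun s => exp (2 * s) • x₀, by simp, fun s => ?_, rfl⟩, ?_⟩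
  · change HasDerivAt _ (Matrix.toEuclideanLin (systemMatrix (-1)) _) s
    rw [toEuclideanLin_systemMatrix_neg_one]
    exact hasDerivAt_exp_mul_smul 2 x₀ s
  · intro u hu x hx_zero hx t ht
    rw [← hx_zero]
    refine norm_le_exp_mul_of_inner_deriv_le hx (fun s => ?_) ht.le
    change ⟪x s, Matrix.toEuclideanLin (systemMatrix (u s)) (x s)⟫ ≤ _
    rw [inner_toEuclideanLin_systemMatrix]
    nlinarith [(hu s).1, sq_nonneg ‖x s‖]

theorem example2_xi_eq_two
    (x₀ : EuclideanSpace ℝ (Fin 2)) (hx₀ : x₀ ≠ 0) :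
    (∃ t > (0:ℝ), ∃ u : ℝ → ℝ, (∀ s, u s ∈ Set.Icc (-1:ℝ) 1) ∧
      ∃ x : ℝ → EuclideanSpace ℝ (Fin 2), x 0 = x₀ ∧
        (∀ s : ℝ, HasDerivAt x
          (Matrix.toEuclideanLin
            (((1 : Matrix (Fin 2) (Fin 2) ℝ) + !![(0:ℝ), -2; 2, 0])
              + u s • ((-(1 : Matrix (Fin 2) (Fin 2) ℝ)) + !![(0:ℝ), -2; 2, 0])) (x s)) s) ∧
        x t = Real.exp (2 * t) • x₀) ∧
    (∀ u : ℝ → ℝ, (∀ s, u s ∈ Set.Icc (-1:ℝ) 1) →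
      ∀ x : ℝ → EuclideanSpace ℝ (Fin 2), x 0 = x₀ →
        (∀ s : ℝ, HasDerivAt x
          (Matrix.toEuclideanLin
            (((1 : Matrix (Fin 2) (Fin 2) ℝ) + !![(0:ℝ), -2; 2, 0])
              + u s • ((-(1 : Matrix (Fin 2) (Fin 2) ℝ)) + !![(0:ℝ), -2; 2, 0])) (x s)) s) →
        ∀ t : ℝ, 0 < t → ‖x t‖ ≤ Real.exp (2 * t) * ‖x₀‖) :=
  example2_xi_eq_two_general x₀
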